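/- arXiv:1803.06416 — 4 statements merged into one kernel-verified Lean document; each statement's English description precedes it below -/
import Mathlib

section
/- Let ε_i = (γ^{1.5}(i+1)/(1+γ)^{i+1.5})·ε/(3√(log(1/δ))) for i ≥ 0, where γ ∈ (0,1), ε ∈ (0,1), and δ ∈ (0, e^{-1}). Then Σ_{i=0}^∞ ε_i² ≤ 2ε²/(9 log(1/δ)), and hence (1/2)Σ_{i=0}^∞ ε_i² + √(2(Σ_{i=0}^∞ ε_i²)·log(1/δ)) ≤ ε. -/
open Real

/-! Squaring the `i`-th term gives `c² (γ/(1+γ))³ (i+1)² xⁱ` with `x = (1+γ)⁻²` and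
`c = ε/(3√(log(1/δ)))`. Since `∑ (i+1)² xⁱ = (1+x)/(1-x)³`, the series sums to
`c² (1+γ)((1+γ)²+1)/(2+γ)³ ≤ c²`. With `L = log(1/δ) > 1` and `ε < 1`, the bound
`∑ ε_i² ≤ 2ε²/(9L)` makes the square-root term at most `2ε/3` and the linear term at most `ε/9`. -/

theorem hasSum_add_one_sq_mul_geometric {𝕜 : Type*} [NormedField 𝕜] {r : 𝕜}
    (hr : ‖r‖ < 1) :
    HasSum (fun n : ℕ ↦ ((n : 𝕜) + 1) ^ 2 * r ^ n) ((1 + r) / (1 - r) ^ 3) := by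
  have h1r : 1 - r ≠ 0 := sub_ne_zero.2 fun h ↦ by simp [← h] at hr
  have hsum : (1 + r) / (1 - r) ^ 3 = 2 * (1 / (1 - r) ^ (2 + 1)) - 1 / (1 - r) ^ (1 + 1) := by
    field_simp
    ring
  rw [hsum]
  -- `(n + 1)² = 2 (n + 2).choose 2 - (n + 1).choose 1`
  refine (((hasSum_choose_mul_geometric_of_norm_lt_one 2 hr).mul_left 2).sub
    (hasSum_choose_mul_geometric_of_norm_lt_one 1 hr)).congr_fun fun n ↦ ?_
  have hchoose := congrArg (Nat.cast : ℕ → 𝕜) (Nat.add_one_mul_choose_eq (n + 1) 1)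
  push_cast [Nat.choose_one_right] at hchoose ⊢
  linear_combination r ^ n * hchoose

theorem sq_schedule_term_eq {γ : ℝ} (hγ : 0 < γ) (c : ℝ) (n : ℕ) :
    (γ ^ (1.5 : ℝ) * ((n : ℝ) + 1) / (1 + γ) ^ ((n : ℝ) + 1.5) * c) ^ 2
      = c ^ 2 * (γ / (1 + γ)) ^ 3 * (((n : ℝ) + 1) ^ 2 * ((1 + γ) ^ 2)⁻¹ ^ n) := by
  have ha : 0 < 1 + γ := by linarith
  have hγ3 : (γ ^ (1.5 : ℝ)) ^ 2 = γ ^ 3 := by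
    rw [← rpow_natCast, ← rpow_mul hγ.le]; norm_num
  have ha3 : ((1 + γ) ^ ((n : ℝ) + 1.5)) ^ 2 = ((1 + γ) ^ 2) ^ n * (1 + γ) ^ 3 := by
    rw [← pow_mul, ← pow_add, ← rpow_natCast, ← rpow_natCast, ← rpow_mul ha.le]
    push_cast; ring_nf
  rw [mul_pow, div_pow, mul_pow, hγ3, ha3, inv_pow]
  field_simp

theorem hasSum_sq_schedule {γ : ℝ} (hγ : 0 < γ) (c : ℝ) :
    HasSum (fun n : ℕ ↦ (γ ^ (1.5 : ℝ) * ((n : ℝ) + 1) / (1 + γ) ^ ((n : ℝ) + 1.5) * c) ^ 2)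
      (c ^ 2 * ((1 + γ) * ((1 + γ) ^ 2 + 1) / (2 + γ) ^ 3)) := by
  have hr : ‖((1 + γ) ^ 2)⁻¹‖ < 1 := by
    rw [norm_inv, norm_pow, Real.norm_of_nonneg (by positivity)]
    exact inv_lt_one_of_one_lt₀ (one_lt_pow₀ (by linarith) two_ne_zero)
  have hsum : c ^ 2 * ((1 + γ) * ((1 + γ) ^ 2 + 1) / (2 + γ) ^ 3) = c ^ 2 * (γ / (1 + γ)) ^ 3 *
      ((1 + ((1 + γ) ^ 2)⁻¹) / (1 - ((1 + γ) ^ 2)⁻¹) ^ 3) := by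
    have hr1 : 1 - ((1 + γ) ^ 2)⁻¹ = γ * (2 + γ) / (1 + γ) ^ 2 := by
      field_simp
      ring
    rw [hr1]
    field_simp
  rw [hsum]
  exact ((hasSum_add_one_sq_mul_geometric hr).mul_left _).congr_fun
    (sq_schedule_term_eq hγ c)

theorem schedule_sum_factor_le_one {γ : ℝ} (hγ : 0 ≤ γ) :
    (1 + γ) * ((1 + γ) ^ 2 + 1) / (2 + γ) ^ 3 ≤ 1 := by
  rw [div_le_one (by positivity)]
  nlinarith

theorem one_lt_log_one_div {δ : ℝ} (hδ0 : 0 < δ) (hδ1 : δ < exp (-1)) : 1 < log (1 / δ) := by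
  have h := log_lt_log hδ0 hδ1
  rw [log_exp] at h
  rw [one_div, log_inv]
  linarith

theorem half_add_sqrt_two_mul_mul_le {V L ε : ℝ} (hL : 1 ≤ L) (hε0 : 0 < ε) (hε1 : ε ≤ 1)
    (hV : V ≤ 2 * ε ^ 2 / (9 * L)) : 1 / 2 * V + √(2 * V * L) ≤ ε := by
  have hL0 : 0 < L := by linarith
  have hsqrt : √(2 * V * L) ≤ 2 * ε / 3 := by
    rw [sqrt_le_iff]
    refine ⟨by positivity, ?_⟩
    calc 2 * V * L ≤ 2 * (2 * ε ^ 2 / (9 * L)) * L := by gcongr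
      _ = (2 * ε / 3) ^ 2 := by field_simp; ring
  have hhalf : 1 / 2 * V ≤ ε / 9 := by
    calc 1 / 2 * V ≤ 1 / 2 * (2 * ε ^ 2 / (9 * L)) := by gcongr
      _ = ε ^ 2 / (9 * L) := by ring
      _ ≤ ε / 9 := by
        rw [div_le_div_iff₀ (by positivity) (by norm_num)]
        nlinarith
  linarith

theorem cdp_composition_fixed_scheduler_general (γ ε δ : ℝ)
    (hγ0 : 0 < γ) (hε0 : 0 < ε) (hε1 : ε < 1)
    (hδ0 : 0 < δ) (hδ1 : δ < Real.exp (-1)) :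
    (∑' i : ℕ, (γ ^ (1.5 : ℝ) * ((i : ℝ) + 1) / (1 + γ) ^ ((i : ℝ) + 1.5) *
        (ε / (3 * Real.sqrt (Real.log (1 / δ))))) ^ 2)
      ≤ 2 * ε ^ 2 / (9 * Real.log (1 / δ)) ∧
    (1 / 2) * (∑' i : ℕ, (γ ^ (1.5 : ℝ) * ((i : ℝ) + 1) / (1 + γ) ^ ((i : ℝ) + 1.5) *
        (ε / (3 * Real.sqrt (Real.log (1 / δ))))) ^ 2)
      + Real.sqrt (2 * (∑' i : ℕ, (γ ^ (1.5 : ℝ) * ((i : ℝ) + 1) / (1 + γ) ^ ((i : ℝ) + 1.5) *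
          (ε / (3 * Real.sqrt (Real.log (1 / δ))))) ^ 2) * Real.log (1 / δ)) ≤ ε := by
  have hL := one_lt_log_one_div hδ0 hδ1
  set L := log (1 / δ)
  have hsum : ∑' i : ℕ, (γ ^ (1.5 : ℝ) * ((i : ℝ) + 1) / (1 + γ) ^ ((i : ℝ) + 1.5) *
      (ε / (3 * √L))) ^ 2 ≤ 2 * ε ^ 2 / (9 * L) := by
    rw [(hasSum_sq_schedule hγ0 _).tsum_eq]
    calc (ε / (3 * √L)) ^ 2 * ((1 + γ) * ((1 + γ) ^ 2 + 1) / (2 + γ) ^ 3)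
        ≤ (ε / (3 * √L)) ^ 2 * 1 := by gcongr; exact schedule_sum_factor_le_one hγ0.le
      _ = ε ^ 2 / (9 * L) := by rw [mul_one, div_pow, mul_pow, sq_sqrt (by linarith)]; norm_num
      _ ≤ 2 * ε ^ 2 / (9 * L) := by gcongr; linarith [sq_nonneg ε]
  exact ⟨hsum, half_add_sqrt_two_mul_mul_le hL.le hε0 hε1.le hsum⟩

/-- With `ε_i = γ^{1.5}(i+1)/(1+γ)^{i+1.5} · ε/(3√(log(1/δ)))` for
`γ ∈ (0,1)`, `ε ∈ (0,1)`, `δ ∈ (0, e⁻¹)`, we have `∑ ε_i² ≤ 2ε²/(9 log(1/δ))`, and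
hence `(1/2)∑ ε_i² + √(2(∑ ε_i²)·log(1/δ)) ≤ ε`. -/
theorem cdp_composition_fixed_scheduler (γ ε δ : ℝ)
    (hγ0 : 0 < γ) (hγ1 : γ < 1) (hε0 : 0 < ε) (hε1 : ε < 1)
    (hδ0 : 0 < δ) (hδ1 : δ < Real.exp (-1)) :
    (∑' i : ℕ, (γ ^ (1.5 : ℝ) * ((i : ℝ) + 1) / (1 + γ) ^ ((i : ℝ) + 1.5) *
        (ε / (3 * Real.sqrt (Real.log (1 / δ))))) ^ 2)
      ≤ 2 * ε ^ 2 / (9 * Real.log (1 / δ)) ∧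
    (1 / 2) * (∑' i : ℕ, (γ ^ (1.5 : ℝ) * ((i : ℝ) + 1) / (1 + γ) ^ ((i : ℝ) + 1.5) *
        (ε / (3 * Real.sqrt (Real.log (1 / δ))))) ^ 2)
      + Real.sqrt (2 * (∑' i : ℕ, (γ ^ (1.5 : ℝ) * ((i : ℝ) + 1) / (1 + γ) ^ ((i : ℝ) + 1.5) *
          (ε / (3 * Real.sqrt (Real.log (1 / δ))))) ^ 2) * Real.log (1 / δ)) ≤ ε :=
  cdp_composition_fixed_scheduler_general γ ε δ hγ0 hε0 hε1 hδ0 hδ1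
end

section
/- Let x, y ∈ Δ([N]) be histograms where x has size t (i.e., t·x^i ∈ ℕ for all i) with all coordinates of y positive, let x̄ be obtained from x by adding one entry (so (t+1)·x̄^i = t·x^i + [i = i₀] for some index i₀), and let ȳ^i = (t/(t+1))·y^i + 1/((t+1)N) for all i. Then the relative entropy satisfies RE(x̄‖ȳ) − RE(x‖y) ≤ (log N)/(t+1) + (log t)/(t+1) + log((t+1)/t). -/
/-!
Write `c = t/(t+1)` and `d = 1/(t+1)`. Then `x̄ = c x + d δ_{i₀}` and `ȳ = c y + d u` with `u` the
uniform distribution, so joint convexity of relative entropy (the log-sum inequality) gives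
`RE(x̄‖ȳ) ≤ c RE(x‖y) + d RE(δ_{i₀}‖u) = c RE(x‖y) + d log N`. Since `c = 1 - d` and
`RE(x‖y) ≥ 0` (Gibbs), the increase is at most `(log N)/(t+1)`; the other two terms of the bound
are nonnegative.
-/

open Real Finset

lemma mul_log_div_add_le {a b c e : ℝ} (ha : 0 ≤ a) (hb : 0 < b) (hc : 0 ≤ c) (he : 0 < e) :
    (a + c) * log ((a + c) / (b + e)) ≤ a * log (a / b) + c * log (c / e) := by
  have hbe : 0 < b + e := by positivity
  have hweights : b / (b + e) + e / (b + e) = 1 := by rw [← add_div, div_self hbe.ne']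
  have hmid : b / (b + e) * (a / b) + e / (b + e) * (c / e) = (a + c) / (b + e) := by
    field_simp
  -- convexity of `s ↦ s log s` at `(a+c)/(b+e)`, a convex combination of `a/b` and `c/e`
  have h := convexOn_mul_log.2 (Set.mem_Ici.2 (div_nonneg ha hb.le))
    (Set.mem_Ici.2 (div_nonneg hc he.le)) (div_pos hb hbe).le (div_pos he hbe).le hweights
  simp only [smul_eq_mul, hmid] at h
  calc (a + c) * log ((a + c) / (b + e))
      = (b + e) * ((a + c) / (b + e) * log ((a + c) / (b + e))) := by field_simp
    _ ≤ (b + e) * (b / (b + e) * (a / b * log (a / b)) + e / (b + e) * (c / e * log (c / e))) :=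
        mul_le_mul_of_nonneg_left h hbe.le
    _ = a * log (a / b) + c * log (c / e) := by field_simp

section RelEntropy

variable {ι : Type*} [Fintype ι]

noncomputable def relEntropy (x y : ι → ℝ) : ℝ := ∑ i, x i * log (x i / y i)

lemma relEntropy_nonneg {x y : ι → ℝ} (hx0 : ∀ i, 0 ≤ x i) (hx1 : ∑ i, x i = 1)
    (hy0 : ∀ i, 0 < y i) (hy1 : ∑ i, y i = 1) : 0 ≤ relEntropy x y := by
  have hterm (i : ι) : x i - y i ≤ x i * log (x i / y i) := by
    have hy := (hy0 i).ne'
    have h := self_sub_one_le_mul_log (div_nonneg (hx0 i) (hy0 i).le)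
    calc x i - y i = y i * (x i / y i - 1) := by field_simp
      _ ≤ y i * (x i / y i * log (x i / y i)) := mul_le_mul_of_nonneg_left h (hy0 i).le
      _ = x i * log (x i / y i) := by field_simp
  calc (0 : ℝ) = ∑ i, (x i - y i) := by rw [sum_sub_distrib, hx1, hy1, sub_self]
    _ ≤ relEntropy x y := sum_le_sum fun i _ ↦ hterm i

lemma relEntropy_add_smul_le {x x' y y' : ι → ℝ} {c d : ℝ} (hx : ∀ i, 0 ≤ x i)
    (hx' : ∀ i, 0 ≤ x' i) (hy : ∀ i, 0 < y i) (hy' : ∀ i, 0 < y' i) (hc : 0 < c) (hd : 0 < d) :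
    relEntropy (c • x + d • x') (c • y + d • y') ≤ c * relEntropy x y + d * relEntropy x' y' := by
  have hscale {r : ℝ} (hr : 0 < r) (u v : ℝ) :
      r * u * log (r * u / (r * v)) = r * (u * log (u / v)) := by
    rw [mul_div_mul_left _ _ hr.ne', mul_assoc]
  simp only [relEntropy, mul_sum, ← sum_add_distrib]
  refine sum_le_sum fun i _ ↦ ?_
  simpa only [Pi.add_apply, Pi.smul_apply, smul_eq_mul, hscale hc, hscale hd] using
    mul_log_div_add_le (mul_nonneg hc.le (hx i)) (mul_pos hc (hy i))
      (mul_nonneg hd.le (hx' i)) (mul_pos hd (hy' i))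

lemma relEntropy_single_uniform [DecidableEq ι] (i₀ : ι) :
    relEntropy (Pi.single i₀ 1) (fun _ ↦ ((Fintype.card ι : ℝ))⁻¹) = log (Fintype.card ι) := by
  rw [relEntropy, sum_eq_single i₀ (fun i _ hi ↦ by simp [hi]) (by simp)]
  simp

lemma relEntropy_mix_single_uniform_sub_le [DecidableEq ι] {x y : ι → ℝ} (hx0 : ∀ i, 0 ≤ x i)
    (hx1 : ∑ i, x i = 1) (hy0 : ∀ i, 0 < y i) (hy1 : ∑ i, y i = 1) (i₀ : ι) {d : ℝ}
    (hd0 : 0 < d) (hd1 : d < 1) :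
    relEntropy ((1 - d) • x + d • Pi.single i₀ 1) ((1 - d) • y + d • fun _ ↦ (Fintype.card ι : ℝ)⁻¹)
      - relEntropy x y ≤ d * log (Fintype.card ι) := by
  have hcard : (0 : ℝ) < Fintype.card ι := by exact_mod_cast Fintype.card_pos_iff.2 ⟨i₀⟩
  have hsingle : ∀ i, 0 ≤ (Pi.single i₀ 1 : ι → ℝ) i := fun i ↦ by
    rw [Pi.single_apply]; split_ifs <;> norm_num
  have hconv := relEntropy_add_smul_le hx0 hsingle hy0 (fun _ ↦ inv_pos.2 hcard)
    (sub_pos.2 hd1) hd0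
  rw [relEntropy_single_uniform] at hconv
  linarith [mul_nonneg hd0.le (relEntropy_nonneg hx0 hx1 hy0 hy1)]

end RelEntropy

theorem relative_entropy_increase_general
    (N t : ℕ) (ht : 1 ≤ t)
    (x y xbar ybar : Fin N → ℝ)
    (hx0 : ∀ i, 0 ≤ x i) (hx1 : ∑ i, x i = 1)
    (hy0 : ∀ i, 0 < y i) (hy1 : ∑ i, y i = 1)
    (i₀ : Fin N)
    (hxbar : ∀ i, ((t : ℝ) + 1) * xbar i = (t : ℝ) * x i + (if i = i₀ then 1 else 0))
    (hybar : ∀ i, ybar i = ((t : ℝ) / ((t : ℝ) + 1)) * y i + 1 / (((t : ℝ) + 1) * N)) :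
    (∑ i, xbar i * Real.log (xbar i / ybar i)) - (∑ i, x i * Real.log (x i / y i))
      ≤ Real.log N / ((t : ℝ) + 1) + Real.log t / ((t : ℝ) + 1)
        + Real.log (((t : ℝ) + 1) / t) := by
  have htR : (1 : ℝ) ≤ t := by exact_mod_cast ht
  set d : ℝ := 1 / (t + 1)
  have hxbar' : xbar = (1 - d) • x + d • Pi.single i₀ 1 := funext fun i ↦ by
    have := hxbar i
    simp only [Pi.add_apply, Pi.smul_apply, smul_eq_mul, Pi.single_apply, d]
    field_simp
    linarith
  have hybar' : ybar = (1 - d) • y + d • fun _ ↦ (Fintype.card (Fin N) : ℝ)⁻¹ := funext fun i ↦ by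
    simp only [hybar, Pi.add_apply, Pi.smul_apply, smul_eq_mul, Fintype.card_fin, d]
    field_simp
    ring
  have hmix := relEntropy_mix_single_uniform_sub_le hx0 hx1 hy0 hy1 i₀
    (by positivity : 0 < d) (by simp only [d]; rw [div_lt_one (by positivity)]; linarith)
  rw [← hxbar', ← hybar', Fintype.card_fin] at hmix
  have hlog_t : 0 ≤ log t / (t + 1) := div_nonneg (log_nonneg htR) (by positivity)
  have hlog_ratio : 0 ≤ log ((t + 1) / t) :=
    log_nonneg ((one_le_div (by positivity)).2 (by linarith))
  calc relEntropy xbar ybar - relEntropy x y ≤ d * log N := hmix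
    _ = log N / (t + 1) := by simp only [d]; ring
    _ ≤ _ := by linarith

/-- Relative entropy increase under one data arrival and the uniform
histogram update: with `x, y ∈ Δ([N])`, `x` of size `t` (counts `t·xⁱ ∈ ℕ`), `y`
positive, `x̄` obtained by adding one entry of type `i₀`, and
`ȳⁱ = (t/(t+1))·yⁱ + 1/((t+1)N)`, we have
`RE(x̄‖ȳ) − RE(x‖y) ≤ (log N)/(t+1) + (log t)/(t+1) + log((t+1)/t)`. -/
theorem relative_entropy_increase
    (N t : ℕ) (hN : 1 ≤ N) (ht : 1 ≤ t)
    (x y xbar ybar : Fin N → ℝ)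
    (hx0 : ∀ i, 0 ≤ x i) (hx1 : ∑ i, x i = 1)
    (hxint : ∀ i, ∃ k : ℕ, x i = (k : ℝ) / t)
    (hy0 : ∀ i, 0 < y i) (hy1 : ∑ i, y i = 1)
    (i₀ : Fin N)
    (hxbar : ∀ i, ((t : ℝ) + 1) * xbar i = (t : ℝ) * x i + (if i = i₀ then 1 else 0))
    (hybar : ∀ i, ybar i = ((t : ℝ) / ((t : ℝ) + 1)) * y i + 1 / (((t : ℝ) + 1) * N)) :
    (∑ i, xbar i * Real.log (xbar i / ybar i)) - (∑ i, x i * Real.log (x i / y i))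
      ≤ Real.log N / ((t : ℝ) + 1) + Real.log t / ((t : ℝ) + 1)
        + Real.log (((t : ℝ) + 1) / t) :=
  relative_entropy_increase_general N t ht x y xbar ybar hx0 hx1 hy0 hy1 i₀ hxbar hybar
end

section
/- Let p ∈ [1/4, 1], n ≥ 17, β < 2^{−15/2}, and c, α > 0 constants with cα·n^p ≥ 24·log(2/β). Then ∫_{n−1}^∞ exp(−cα·t^p/48) dt ≤ (6n/p)·exp(−cα·n^p/51). -/
/-!
Write `v = p A t ^ p`. The function `φ t = t e^{-A t^p} (1 / v + (1 - p) / v ^ 2)` satisfies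
`-φ' t = e^{-A t^p} (1 - (1 - p)(1 - 2p) / v ^ 2)`, so once `(1 - p)(1 - 2p) ≤ θ v ^ 2` on the
range of integration, `∫_{t > m} e^{-A t^p} dt ≤ φ m / (1 - θ)`. Take `A = cα/48`, `m = n - 1`.
Since `(n - 1)^p ≥ (16/17) n^p`, `A m^p ≥ cα n^p / 51`, which by the hypothesis on `β` is at
least `4 log 2 > 11/4`; this makes `θ = 4/5` admissible and gives `5 φ m ≤ (6m/p) e^{-A m^p}`.
-/

open MeasureTheory Real Filter Set Topology

theorem setIntegral_Ioi_le_neg_of_le_hasDerivAt {f g g' : ℝ → ℝ} {a : ℝ}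
    (hf : AEStronglyMeasurable f (volume.restrict (Ioi a))) (hf0 : ∀ t ∈ Ioi a, 0 ≤ f t)
    (hfg : ∀ t ∈ Ioi a, f t ≤ g' t) (hderiv : ∀ t ∈ Ici a, HasDerivAt g (g' t) t)
    (hg : Tendsto g atTop (𝓝 0)) :
    ∫ t in Ioi a, f t ≤ -g a := by
  have hg'0 : ∀ t ∈ Ioi a, 0 ≤ g' t := fun t ht => (hf0 t ht).trans (hfg t ht)
  have hg'int := integrableOn_Ioi_deriv_of_nonneg' hderiv hg'0 hg
  have hfint : IntegrableOn f (Ioi a) := hg'int.mono' hf <|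
    (ae_restrict_iff' measurableSet_Ioi).2 <| ae_of_all _ fun t ht => by
      rw [norm_of_nonneg (hf0 t ht)]; exact hfg t ht
  calc ∫ t in Ioi a, f t ≤ ∫ t in Ioi a, g' t :=
        setIntegral_mono_on hfint hg'int measurableSet_Ioi hfg
    _ = -g a := by rw [integral_Ioi_of_hasDerivAt_of_nonneg' hderiv hg'0 hg, zero_sub]

/-- Two terms of the asymptotic expansion of `∫_t^∞ e^{-A s^p} ds`: the leading term
`t^{1-p} e^{-A t^p} / (pA)` alone majorizes the tail (up to a constant) only when
`p A t^p > 1 - p`, which fails for `p = 1/4` and `A t^p = 4 log 2`. -/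
noncomputable def tailMajorant (A p t : ℝ) : ℝ :=
  t * exp (-(A * t ^ p)) * (1 / (p * A * t ^ p) + (1 - p) / (p * A * t ^ p) ^ 2)

theorem hasDerivAt_tailMajorant {A p t : ℝ} (hA : A ≠ 0) (hp : p ≠ 0) (ht : 0 < t) :
    HasDerivAt (tailMajorant A p)
      (-(exp (-(A * t ^ p)) * (1 - (1 - p) * (1 - 2 * p) / (p * A * t ^ p) ^ 2))) t := by
  have hpow : HasDerivAt (fun s => s ^ p) (p * t ^ (p - 1)) t :=
    hasDerivAt_rpow_const (Or.inl ht.ne')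
  have hv : HasDerivAt (fun s => p * A * s ^ p) (p * A * (p * t ^ (p - 1))) t :=
    hpow.const_mul _
  have hv0 : p * A * t ^ p ≠ 0 := by have := rpow_pos_of_pos ht p; positivity
  have hderiv : HasDerivAt
      (fun s => s * exp (-(A * s ^ p)) * ((p * A * s ^ p)⁻¹ + (1 - p) * ((p * A * s ^ p) ^ 2)⁻¹))
      _ t :=
    ((hasDerivAt_id' t).mul ((hpow.const_mul A).neg.exp)).mul
      ((hv.inv hv0).add (((hv.pow 2).inv (pow_ne_zero 2 hv0)).const_mul (1 - p)))
  convert hderiv using 1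
  · funext s
    simp only [tailMajorant, div_eq_mul_inv, one_mul]
  · simp only [Pi.mul_apply, Pi.neg_apply, Pi.pow_apply, Nat.cast_ofNat]
    rw [rpow_sub_one ht.ne']
    field_simp
    ring

theorem tendsto_tailMajorant_atTop {A p : ℝ} (hA : 0 < A) (hp : 0 < p) :
    Tendsto (tailMajorant A p) atTop (𝓝 0) := by
  have hpow := tendsto_rpow_atTop hp
  have hexp : Tendsto (fun t => t * exp (-(A * t ^ p))) atTop (𝓝 0) := by
    refine ((tendsto_rpow_mul_exp_neg_mul_atTop_nhds_zero p⁻¹ A hA).comp hpow).congr' ?_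
    filter_upwards [eventually_ge_atTop 0] with t ht
    simp [rpow_rpow_inv ht hp.ne']
  have hw : Tendsto (fun t => (p * A * t ^ p)⁻¹) atTop (𝓝 0) :=
    tendsto_inv_atTop_zero.comp (hpow.const_mul_atTop (by positivity))
  have := hexp.mul (hw.add ((hw.pow 2).const_mul (1 - p)))
  simp only [ne_eq, OfNat.ofNat_ne_zero, not_false_eq_true, zero_pow, mul_zero, add_zero] at this
  exact this.congr fun t => by simp only [tailMajorant, div_eq_mul_inv, one_mul, inv_pow]

theorem integral_Ioi_exp_neg_mul_rpow_le {A p m θ : ℝ} (hA : 0 < A) (hp : 0 < p) (hm : 0 < m)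
    (hθ0 : 0 ≤ θ) (hθ1 : θ < 1) (hθ : (1 - p) * (1 - 2 * p) ≤ θ * (p * A * m ^ p) ^ 2) :
    ∫ t in Ioi m, exp (-(A * t ^ p)) ≤ tailMajorant A p m / (1 - θ) := by
  have key := setIntegral_Ioi_le_neg_of_le_hasDerivAt (f := fun t => exp (-(A * t ^ p)))
    (g := fun t => -(tailMajorant A p t / (1 - θ))) (a := m)
    (by fun_prop) (fun t _ => (exp_pos _).le) ?_
    (fun t ht => ((hasDerivAt_tailMajorant hA.ne' hp.ne' (hm.trans_le ht)).div_const _).neg)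
    (by simpa using ((tendsto_tailMajorant_atTop hA hp).div_const (1 - θ)).neg)
  · simpa using key
  intro t ht
  have hv : 0 < p * A * m ^ p := by have := rpow_pos_of_pos hm p; positivity
  have hmt : p * A * m ^ p ≤ p * A * t ^ p := by gcongr; exact ht.le
  have hk : (1 - p) * (1 - 2 * p) / (p * A * t ^ p) ^ 2 ≤ θ := by
    rw [div_le_iff₀ (pow_pos (hv.trans_le hmt) 2)]
    exact hθ.trans (by gcongr)
  rw [neg_div, neg_neg, le_div_iff₀ (sub_pos.2 hθ1)]
  exact mul_le_mul_of_nonneg_left (by linarith) (exp_pos _).le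

theorem one_sub_mul_one_sub_two_mul_le {p x : ℝ} (hp : 1 / 4 ≤ p) (hx : 11 / 4 ≤ x) :
    (1 - p) * (1 - 2 * p) ≤ 4 / 5 * (p * x) ^ 2 := by
  have : (11 / 4) ^ 2 ≤ x ^ 2 := by gcongr
  nlinarith [mul_le_mul_of_nonneg_left this (sq_nonneg p)]

theorem tailMajorant_le {A p m : ℝ} (hp : 1 / 4 ≤ p) (hm : 0 < m) (hx : 11 / 4 ≤ A * m ^ p) :
    5 * tailMajorant A p m ≤ 6 * m / p * exp (-(A * m ^ p)) := by
  have hp0 : 0 < p := by linarith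
  set y := p * (A * m ^ p)
  have hy : 11 / 4 * p ≤ y := by nlinarith
  have hy0 : 0 < y := by linarith
  have hcoeff : 5 * (1 / y + (1 - p) / y ^ 2) ≤ 6 / p := by
    rw [div_add_div _ _ hy0.ne' (by positivity), mul_div_assoc',
      div_le_div_iff₀ (by positivity) hp0]
    nlinarith [mul_nonneg (mul_nonneg hy0.le hy0.le) (sub_nonneg.2 hy)]
  calc 5 * tailMajorant A p m = m * exp (-(A * m ^ p)) * (5 * (1 / y + (1 - p) / y ^ 2)) := by
        simp only [tailMajorant, y, mul_assoc]; ring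
    _ ≤ m * exp (-(A * m ^ p)) * (6 / p) := by gcongr
    _ = 6 * m / p * exp (-(A * m ^ p)) := by ring

theorem mul_rpow_le_rpow_mul {r y p : ℝ} (hr0 : 0 ≤ r) (hr1 : r ≤ 1) (hy : 0 ≤ y) (hp : p ≤ 1) :
    r * y ^ p ≤ (r * y) ^ p := by
  rw [mul_rpow hr0 hy]
  gcongr
  exact self_le_rpow_of_le_one hr0 hr1 hp

theorem one_sub_mul_log_two_lt_log_two_div {β s : ℝ} (hβ0 : 0 < β) (hβ : β < 2 ^ s) :
    (1 - s) * log 2 < log (2 / β) := by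
  have := log_lt_log hβ0 hβ
  rw [log_rpow two_pos] at this
  rw [log_div two_ne_zero hβ0.ne']
  linarith

/-- For `p ∈ [1/4,1]`, integer `n ≥ 17`, `β ∈ (0, 2^{−15/2})`, and
constants `c, α > 0` with `cα·n^p ≥ 24 log(2/β)`,
`∫_{n−1}^∞ exp(−cα t^p/48) dt ≤ (6n/p)·exp(−cα n^p/51)`. -/
theorem integral_exp_neg_pow_bound (p c α β : ℝ) (n : ℕ)
    (hp1 : 1 / 4 ≤ p) (hp2 : p ≤ 1) (hn : 17 ≤ n)
    (hβ0 : 0 < β) (hβ1 : β < 2 ^ (-(15 : ℝ) / 2))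
    (hc : 0 < c) (hα : 0 < α)
    (hbig : 24 * Real.log (2 / β) ≤ c * α * (n : ℝ) ^ p) :
    (∫ t in Set.Ioi ((n : ℝ) - 1), Real.exp (-(c * α * t ^ p / 48)))
      ≤ 6 * (n : ℝ) / p * Real.exp (-(c * α * (n : ℝ) ^ p / 51)) := by
  have hp0 : 0 < p := by linarith
  have hn' : (17 : ℝ) ≤ n := by exact_mod_cast hn
  have hm : 0 < (n : ℝ) - 1 := by linarith
  set A := c * α / 48 with hA
  have hx51 : c * α * (n : ℝ) ^ p / 51 ≤ A * ((n : ℝ) - 1) ^ p :=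
    calc c * α * (n : ℝ) ^ p / 51 = A * (16 / 17 * (n : ℝ) ^ p) := by ring
      _ ≤ A * (16 / 17 * (n : ℝ)) ^ p := by
        gcongr; exact mul_rpow_le_rpow_mul (by norm_num) (by norm_num) (by positivity) hp2
      _ ≤ A * ((n : ℝ) - 1) ^ p := by gcongr; linarith
  have hx : 11 / 4 ≤ A * ((n : ℝ) - 1) ^ p := by
    have := one_sub_mul_log_two_lt_log_two_div hβ0 hβ1
    have := log_two_gt_d9
    linarith
  have hθ := one_sub_mul_one_sub_two_mul_le hp1 hx
  rw [← mul_assoc] at hθ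
  calc (∫ t in Ioi ((n : ℝ) - 1), exp (-(c * α * t ^ p / 48)))
      = ∫ t in Ioi ((n : ℝ) - 1), exp (-(A * t ^ p)) := by simp_rw [hA, mul_div_right_comm]
    _ ≤ tailMajorant A p ((n : ℝ) - 1) / (1 - 4 / 5) :=
      integral_Ioi_exp_neg_mul_rpow_le (by positivity) hp0 hm (by norm_num) (by norm_num) hθ
    _ = 5 * tailMajorant A p ((n : ℝ) - 1) := by ring
    _ ≤ 6 * ((n : ℝ) - 1) / p * exp (-(A * ((n : ℝ) - 1) ^ p)) := tailMajorant_le hp1 hm hx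
    _ ≤ 6 * (n : ℝ) / p * exp (-(c * α * (n : ℝ) ^ p / 51)) := by gcongr; linarith
end

section
/- For a > 1 and x > 0 with e^x > 2^a, the upper incomplete gamma function satisfies Γ(a, x) ≤ 2^a · x^{a−1} · e^{−x}. -/
open MeasureTheory Real

lemma aux_log_ineq {s : ℝ} (hs : 0 < s) : Real.log s ≤ Real.log 2 * (s + 1) / 2 := by
  set c := Real.log 2 with hc
  have hc1 : 0.6931 < c := by have := Real.log_two_gt_d9; linarith
  have hc2 : c < 0.6932 := by have := Real.log_two_lt_d9; linarith
  have hcpos : 0 < c := by linarith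
  have h1 : Real.log (s * (c / 2)) ≤ s * (c / 2) - 1 :=
    Real.log_le_sub_one_of_pos (by positivity)
  have h2 : Real.log (s * (c / 2)) = Real.log s + Real.log (c / 2) :=
    Real.log_mul (ne_of_gt hs) (by positivity)
  have h3 : Real.log (c / 2) = Real.log c - c := by
    rw [Real.log_div (ne_of_gt hcpos) two_ne_zero, hc]
  have h4 : Real.log (1 / c) ≤ 1 / c - 1 := Real.log_le_sub_one_of_pos (by positivity)
  have h5 : Real.log (1 / c) = -Real.log c := by
    rw [Real.log_div one_ne_zero (ne_of_gt hcpos), Real.log_one]; ring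
  have h6 : Real.log s ≤ s * (c / 2) - 1 + (1 / c - 1) + c := by
    have := h4; rw [h5] at this
    linarith [h1, h2.symm.le, h3]
  have h7 : 1 / c < 1.443 := by
    rw [div_lt_iff₀ hcpos]; nlinarith
  nlinarith [hs]

/-- For `a > 1` and `x > 0` with `e^x > 2^a`, the upper incomplete
gamma function `Γ(a,x) = ∫_x^∞ t^{a−1} e^{−t} dt` satisfies
`Γ(a,x) ≤ 2^a · x^{a−1} · e^{−x}`. -/
theorem upper_incomplete_gamma_bound (a x : ℝ) (ha : 1 < a) (hx : 0 < x)
    (hxa : (2 : ℝ) ^ a < Real.exp x) :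
    (∫ t in Set.Ioi x, t ^ (a - 1) * Real.exp (-t))
      ≤ (2 : ℝ) ^ a * x ^ (a - 1) * Real.exp (-x) := by
  set c := Real.log 2 with hc
  have hcpos : 0 < c := Real.log_pos (by norm_num)
  have hax : a * c < x := by
    have h := Real.log_lt_log (Real.rpow_pos_of_pos two_pos a) hxa
    rw [Real.log_rpow two_pos, Real.log_exp, ← hc] at h
    linarith
  set K : ℝ := 2 ^ (a - 1) * x ^ (a - 1) * Real.exp (-(x / 2)) with hK
  have hpt : ∀ t ∈ Set.Ioi x, t ^ (a - 1) * Real.exp (-t) ≤ K * Real.exp (-(1 / 2) * t) := by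
    intro t ht
    have htx : x < t := ht
    have htpos : 0 < t := hx.trans htx
    have hs : 0 < t / x := by positivity
    have hlog := aux_log_ineq hs
    have hlogdiv : Real.log (t / x) = Real.log t - Real.log x :=
      Real.log_div (ne_of_gt htpos) (ne_of_gt hx)
    -- (a-1) * (log t - log x) ≤ (a-1)*c + (t-x)/2
    have key : (a - 1) * (Real.log t - Real.log x) ≤ (a - 1) * c + (t - x) / 2 := by
      rw [← hlogdiv]
      have h1 : (a - 1) * Real.log (t / x) ≤ (a - 1) * (c * (t / x + 1) / 2) :=
        mul_le_mul_of_nonneg_left hlog (by linarith)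
      have h2 : (a - 1) * (c * (t / x + 1) / 2) = (a - 1) * c + (a - 1) * c * (t / x - 1) / 2 := by
        ring
      have h3 : (a - 1) * c * (t / x - 1) / 2 ≤ x * (t / x - 1) / 2 := by
        have hsx : 0 ≤ t / x - 1 := by
          rw [le_sub_iff_add_le, zero_add, le_div_iff₀ hx, one_mul]; exact htx.le
        have : (a - 1) * c ≤ x := by nlinarith
        nlinarith
      have h4 : x * (t / x - 1) = t - x := by field_simp
      nlinarith
    have e1 : t ^ (a - 1) = Real.exp (Real.log t * (a - 1)) := Real.rpow_def_of_pos htpos _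
    have e2 : x ^ (a - 1) = Real.exp (Real.log x * (a - 1)) := Real.rpow_def_of_pos hx _
    have e3 : (2 : ℝ) ^ (a - 1) = Real.exp (c * (a - 1)) := Real.rpow_def_of_pos two_pos _
    rw [hK, e1, e2, e3, ← Real.exp_add, ← Real.exp_add, ← Real.exp_add, ← Real.exp_add,
      Real.exp_le_exp]
    nlinarith [key]
  have hKpos : 0 < K := by
    rw [hK]; positivity
  have hg_int : IntegrableOn (fun t => K * Real.exp (-(1 / 2) * t)) (Set.Ioi x) :=
    (exp_neg_integrableOn_Ioi x (by norm_num : (0:ℝ) < 1 / 2)).const_mul K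
  have hf_meas : AEStronglyMeasurable (fun t => t ^ (a - 1) * Real.exp (-t))
      ((volume : Measure ℝ).restrict (Set.Ioi x)) := by
    apply ContinuousOn.aestronglyMeasurable _ measurableSet_Ioi
    apply ContinuousOn.mul
    · exact ContinuousOn.rpow_const continuousOn_id
        (fun t ht => Or.inl (ne_of_gt (hx.trans ht)))
    · exact (Real.continuous_exp.comp continuous_neg).continuousOn
  have hf_int : IntegrableOn (fun t => t ^ (a - 1) * Real.exp (-t)) (Set.Ioi x) := by
    refine hg_int.mono' hf_meas ?_
    filter_upwards [ae_restrict_mem measurableSet_Ioi] with t ht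
    have htpos : 0 < t := hx.trans ht
    rw [Real.norm_eq_abs, abs_of_nonneg (by positivity)]
    exact hpt t ht
  have hmono : (∫ t in Set.Ioi x, t ^ (a - 1) * Real.exp (-t))
      ≤ ∫ t in Set.Ioi x, K * Real.exp (-(1 / 2) * t) :=
    setIntegral_mono_on hf_int hg_int measurableSet_Ioi hpt
  have hcalc : (∫ t in Set.Ioi x, K * Real.exp (-(1 / 2) * t))
      = (2 : ℝ) ^ a * x ^ (a - 1) * Real.exp (-x) := by
    rw [integral_const_mul]
    have hcomp : (∫ t in Set.Ioi x, Real.exp (-(1 / 2) * t))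
        = (1 / 2 : ℝ)⁻¹ • ∫ u in Set.Ioi ((1 / 2) * x), Real.exp (-u) := by
      have := integral_comp_mul_left_Ioi (fun u => Real.exp (-u)) x
        (by norm_num : (0:ℝ) < 1 / 2)
      simpa [neg_mul] using this
    rw [hcomp, integral_exp_neg_Ioi]
    have h2a : (2 : ℝ) ^ a = 2 ^ (a - 1) * 2 := by
      rw [← Real.rpow_add_one two_ne_zero (a - 1)]; ring_nf
    have hexp : Real.exp (-(x / 2)) * Real.exp (-(1 / 2 * x)) = Real.exp (-x) := by
      rw [← Real.exp_add]; congr 1; ring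
    rw [hK, h2a, smul_eq_mul]
    linear_combination (2 ^ (a - 1) * x ^ (a - 1) * 2) * hexp
  rw [hcalc] at hmono
  exact hmono
end
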